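/- arXiv:1606.02635 — 3 statements merged into one kernel-verified Lean document; each statement's English description precedes it below -/
import Mathlib

section
/- Given nonnegative reals w_1, ..., w_n with each w_i ≤ 1 and ∑ w_i ≤ m, define S_0 = 0 and S_i = w_1 + ... + w_i, and for each task i and processor k ∈ {1,...,m} define the assigned sub-interval A_{ik} = [max(S_{i-1}, k-1), min(S_i, k)] (empty if max ≥ min). Then for each fixed task i, the intervals {A_{ik} − (k−1) : k = 1,...,m} (i.e., shifted back into [0,1], representing execution time windows within the scheduling interval) are pairwise disjoint up to measure zero. -/
open MeasureTheory Set

/-- The part of `[a, b]` lying in `[k - 1, k]`, shifted by `-(k - 1)` into `[0, 1]`. -/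
def wrapPiece (a b k : ℝ) : Set ℝ :=
  Icc (max a (k - 1) - (k - 1)) (min b k - (k - 1))

lemma volume_Icc_inter_Icc_eq_zero_of_le {a b c d : ℝ} (hda : d ≤ a) :
    volume (Icc a b ∩ Icc c d) = 0 := by
  refine measure_mono_null (t := Icc a d) (fun _ hx => ⟨hx.1.1, hx.2.2⟩) ?_
  rw [Real.volume_Icc, ENNReal.ofReal_eq_zero]
  linarith

/-- A segment of length at most one finishes on a later processor before it starts on an
earlier one. -/
lemma wrapPiece_upper_le_lower {a b k k' : ℝ} (hab : b ≤ a + 1) (hkk' : k + 1 ≤ k') :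
    min b k' - (k' - 1) ≤ max a (k - 1) - (k - 1) := by
  linarith [min_le_left b k', le_max_left a (k - 1)]

lemma volume_wrapPiece_inter_eq_zero {a b k k' : ℝ} (hab : b ≤ a + 1)
    (hkk' : k + 1 ≤ k' ∨ k' + 1 ≤ k) :
    volume (wrapPiece a b k ∩ wrapPiece a b k') = 0 := by
  rcases hkk' with hkk' | hk'k
  · exact volume_Icc_inter_Icc_eq_zero_of_le (wrapPiece_upper_le_lower hab hkk')
  · rw [inter_comm]
    exact volume_Icc_inter_Icc_eq_zero_of_le (wrapPiece_upper_le_lower hab hk'k)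

theorem stmt1_general (n m : ℕ) (w : ℕ → ℝ)
    (hw : ∀ i < n, 0 ≤ w i ∧ w i ≤ 1)
    (S : ℕ → ℝ) (hS : ∀ i, S i = ∑ j ∈ Finset.range i, w j) :
    ∀ i < n, ∀ k ∈ Finset.Icc 1 m, ∀ k' ∈ Finset.Icc 1 m, k ≠ k' →
      volume
        ((Set.Icc (max (S i) ((k : ℝ) - 1) - ((k : ℝ) - 1))
                  (min (S (i + 1)) (k : ℝ) - ((k : ℝ) - 1))) ∩
         (Set.Icc (max (S i) ((k' : ℝ) - 1) - ((k' : ℝ) - 1))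
                  (min (S (i + 1)) (k' : ℝ) - ((k' : ℝ) - 1)))) = 0 := by
  intro i hi k _ k' _ hkk'
  have hstep : S (i + 1) ≤ S i + 1 := by
    rw [hS, hS, Finset.sum_range_succ]
    linarith [(hw i hi).2]
  have hsep : (k : ℝ) + 1 ≤ k' ∨ (k' : ℝ) + 1 ≤ k := by
    rcases Nat.lt_or_gt_of_ne hkk' with h | h
    · exact Or.inl (by exact_mod_cast h)
    · exact Or.inr (by exact_mod_cast h)
  exact volume_wrapPiece_inter_eq_zero hstep hsep

/-- For a fixed task, its wrap-around pieces, shifted back into [0,1], are pairwise disjoint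
up to measure zero. -/
theorem stmt1 (n m : ℕ) (hm : 0 < m) (w : ℕ → ℝ)
    (hw : ∀ i < n, 0 ≤ w i ∧ w i ≤ 1)
    (hsum : ∑ i ∈ Finset.range n, w i ≤ m)
    (S : ℕ → ℝ) (hS : ∀ i, S i = ∑ j ∈ Finset.range i, w j) :
    ∀ i < n, ∀ k ∈ Finset.Icc 1 m, ∀ k' ∈ Finset.Icc 1 m, k ≠ k' →
      volume
        ((Set.Icc (max (S i) ((k : ℝ) - 1) - ((k : ℝ) - 1))
                  (min (S (i + 1)) (k : ℝ) - ((k : ℝ) - 1))) ∩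
         (Set.Icc (max (S i) ((k' : ℝ) - 1) - ((k' : ℝ) - 1))
                  (min (S (i + 1)) (k' : ℝ) - ((k' : ℝ) - 1)))) = 0 :=
  stmt1_general n m w hw S hS
end

section
/- Fix an interval index μ and suppose the fractional solution satisfies ∑_q w_i^q[μ] ≤ 1 for all i and ∑_{i,q} w_i^q[μ] ≤ m. Flatten the pairs (i,q) into a single list ordered lexicographically and apply the wrap-around construction with weights w_i^q[μ]. Then the resulting piecewise-constant binary assignment a_{ik}^q(t) on [τ_μ, τ_{μ+1}] satisfies: (a) ∑_{k,q} a_{ik}^q(t) ≤ 1 for all i and almost all t; (b) ∑_{i,q} a_{ik}^q(t) ≤ 1 for all k and almost all t; (c) ∫ ∑_k a_{ik}^q(t) dt = (τ_{μ+1}−τ_μ) w_i^q[μ] for all i, q. -/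
/-!
Lay the pieces `(i, q)` end to end on a line in lexicographic order, piece `(i, q)` occupying
`[S (i, q), S (i, q) + w i q)`, and let processor `k` run, at normalized time `x ∈ [0, 1)`, the
piece containing `x + k`. The pieces are disjoint, so a processor runs at most one piece at a
time. The pieces of task `i` lie in a window `[B, B + 1)`, `B` being the total load of the
earlier tasks, and `x + k`, `x + k'` can only both lie in such a window if `k = k'`; so a task
never runs on two processors at once. Processor `k` spends `(τμ1 - τμ) • |[k, k + 1) ∩ piece|`
on a piece, and since all pieces lie in `[0, m]` these lengths add up to the piece's length.
-/

open MeasureTheory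

lemma sum_indicator_one_le_one {ι α : Type*} [Fintype ι] (s : ι → Set α) (x : α)
    (h : ∀ i j, x ∈ s i → x ∈ s j → i = j) : ∑ i, (s i).indicator (1 : α → ℝ) x ≤ 1 := by
  classical
  simp only [Set.indicator_apply, Pi.one_apply, Finset.sum_boole]
  exact_mod_cast Finset.card_le_one.mpr fun i hi j hj =>
    h i j (Finset.mem_filter.mp hi).2 (Finset.mem_filter.mp hj).2

lemma Nat.eq_of_add_mem_Ico {x b : ℝ} {k k' : ℕ} (hk : x + k ∈ Set.Ico b (b + 1))
    (hk' : x + k' ∈ Set.Ico b (b + 1)) : k = k' := by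
  obtain ⟨hk₁, hk₂⟩ := hk
  obtain ⟨hk'₁, hk'₂⟩ := hk'
  have h₁ : k < k' + 1 := by exact_mod_cast (by linarith : (k : ℝ) < k' + 1)
  have h₂ : k' < k + 1 := by exact_mod_cast (by linarith : (k' : ℝ) < k + 1)
  omega

lemma intervalIntegral_indicator_Ico_one {A B c d : ℝ} (hAB : A ≤ B) (hAc : A ≤ c)
    (hdB : d ≤ B) :
    ∫ t in A..B, (Set.Ico c d).indicator 1 t = max (d - c) 0 := by
  have hsub : Set.Ico c d ⊆ Set.Icc A B := fun t ht => ⟨hAc.trans ht.1, ht.2.le.trans hdB⟩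
  rw [intervalIntegral.integral_of_le hAB, ← integral_Icc_eq_integral_Ioc,
    integral_indicator_one measurableSet_Ico, measureReal_restrict_apply measurableSet_Ico,
    Set.inter_eq_left.mpr hsub, Real.volume_real_Ico]

/-- `min (max x a) b` clamps `x` to `[a, b]`; the left side is the length of `[x, y] ∩ [a, b]`. -/
lemma min_max_sub_min_max {a b x y : ℝ} (hab : a ≤ b) (hxy : x ≤ y) :
    min (max y a) b - min (max x a) b = max (min b y - max a x) 0 := by
  rcases le_total y a with h|h <;> rcases le_total x a with h'|h' <;>
    rcases le_total y b with h2|h2 <;> rcases le_total x b with h3|h3 <;>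
    simp only [min_def, max_def] <;> split_ifs <;> linarith

open Finset in
def prefixSum {α : Type*} [Fintype α] [LinearOrder α] (w : α → ℝ) (p : α) : ℝ :=
  ∑ x ∈ univ.filter (· < p), w x

namespace prefixSum

open Finset

variable {α : Type*} [Fintype α] [LinearOrder α] {w : α → ℝ}

lemma nonneg (hw : ∀ x, 0 ≤ w x) (p : α) : 0 ≤ prefixSum w p :=
  sum_nonneg fun x _ => hw x

lemma add_le_of_lt (hw : ∀ x, 0 ≤ w x) {p p' : α} (h : p < p') :
    prefixSum w p + w p ≤ prefixSum w p' := by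
  have hsub : insert p (univ.filter (· < p)) ⊆ univ.filter (· < p') := by
    intro x hx
    rcases mem_insert.mp hx with rfl | hx
    · simpa using h
    · simpa using (mem_filter.mp hx).2.trans h
  have := sum_le_sum_of_subset_of_nonneg hsub fun x _ _ => hw x
  rwa [sum_insert (by simp), add_comm] at this

lemma add_le_sum (hw : ∀ x, 0 ≤ w x) (p : α) : prefixSum w p + w p ≤ ∑ x, w x := by
  have := sum_le_sum_of_subset_of_nonneg (subset_univ (insert p (univ.filter (· < p))))
    fun x _ _ => hw x
  rwa [sum_insert (by simp), add_comm] at this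

lemma eq_of_mem_Ico (hw : ∀ x, 0 ≤ w x) {p p' : α} {x : ℝ}
    (hp : x ∈ Set.Ico (prefixSum w p) (prefixSum w p + w p))
    (hp' : x ∈ Set.Ico (prefixSum w p') (prefixSum w p' + w p')) : p = p' := by
  rcases lt_trichotomy p p' with h | h | h
  · linarith [add_le_of_lt hw h, hp.2, hp'.1]
  · exact h
  · linarith [add_le_of_lt hw h, hp.1, hp'.2]

end prefixSum

def lexPrefixSum {α β : Type*} [Fintype α] [LinearOrder α] [Fintype β] [LinearOrder β]
    (w : α → β → ℝ) (p : α × β) : ℝ :=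
  prefixSum (fun x : α ×ₗ β => w (ofLex x).1 (ofLex x).2) (toLex p)

namespace lexPrefixSum

open Finset

variable {α β : Type*} [Fintype α] [LinearOrder α] [Fintype β] [LinearOrder β] {w : α → β → ℝ}

lemma eq_sum_filter (w : α → β → ℝ) (p : α × β) :
    lexPrefixSum w p = ∑ p' ∈ univ.filter
      (fun p' : α × β => p'.1 < p.1 ∨ (p'.1 = p.1 ∧ p'.2 < p.2)), w p'.1 p'.2 := by
  rw [lexPrefixSum, prefixSum, sum_filter, sum_filter, ← Equiv.sum_comp toLex]
  simp only [Prod.Lex.toLex_lt_toLex, ofLex_toLex]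

variable (w) in
lemma eq_add (i : α) (q : β) :
    lexPrefixSum w (i, q) = prefixSum (fun j => ∑ r, w j r) i + prefixSum (w i) q := by
  classical
  have hsplit : ∀ j r, (if toLex (j, r) < toLex (i, q) then w j r else 0)
      = (if j < i then w j r else 0) + if j = i then (if r < q then w i r else 0) else 0 := by
    intro j r
    simp only [Prod.Lex.toLex_lt_toLex]
    rcases lt_trichotomy j i with h | rfl | h
    · simp [h, h.ne]
    · simp
    · simp [h.ne', not_lt_of_gt h]
  simp only [lexPrefixSum, prefixSum, sum_filter]
  rw [← (Equiv.sum_comp toLex _), Fintype.sum_prod_type]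
  simp only [ofLex_toLex, hsplit, sum_add_distrib, sum_ite_irrel, sum_const_zero, sum_ite_eq',
    mem_univ, if_true]

lemma Ico_subset_Ico_row (hw : ∀ i q, 0 ≤ w i q) (i : α) (q : β) :
    Set.Ico (lexPrefixSum w (i, q)) (lexPrefixSum w (i, q) + w i q) ⊆
      Set.Ico (prefixSum (fun j => ∑ r, w j r) i)
        (prefixSum (fun j => ∑ r, w j r) i + ∑ r, w i r) := by
  refine Set.Ico_subset_Ico ?_ ?_ <;> rw [eq_add]
  · linarith [prefixSum.nonneg (hw i) q]
  · linarith [prefixSum.add_le_sum (hw i) q]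

lemma nonneg (hw : ∀ i q, 0 ≤ w i q) (p : α × β) : 0 ≤ lexPrefixSum w p :=
  prefixSum.nonneg (fun _ => hw _ _) _

lemma add_le_sum (hw : ∀ i q, 0 ≤ w i q) (i : α) (q : β) :
    lexPrefixSum w (i, q) + w i q ≤ ∑ j, ∑ r, w j r := by
  rw [eq_add]
  linarith [prefixSum.add_le_sum (hw i) q,
    prefixSum.add_le_sum (w := fun j => ∑ r, w j r) (fun j => sum_nonneg fun r _ => hw j r) i]

lemma eq_of_mem_Ico (hw : ∀ i q, 0 ≤ w i q) {p p' : α × β} {y : ℝ}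
    (hp : y ∈ Set.Ico (lexPrefixSum w p) (lexPrefixSum w p + w p.1 p.2))
    (hp' : y ∈ Set.Ico (lexPrefixSum w p') (lexPrefixSum w p' + w p'.1 p'.2)) : p = p' :=
  toLex.injective (prefixSum.eq_of_mem_Ico (fun _ => hw _ _) hp hp')

end lexPrefixSum

/-- The time window in which processor `k` runs the piece `[s, e)` of the workload line:
`[k, k + 1) ∩ [s, e)`, shifted by `-k` and rescaled from `[0, 1)` onto `[τ, τ')`. -/
def wrapSlot (τ τ' s e : ℝ) (k : ℕ) : Set ℝ :=
  Set.Ico (τ + (max s k - k) * (τ' - τ)) (τ + (min e (k + 1) - k) * (τ' - τ))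

namespace wrapSlot

variable {τ τ' s e : ℝ}

lemma mem_iff (h : τ < τ') {k : ℕ} {t : ℝ} :
    t ∈ wrapSlot τ τ' s e k ↔
      (t - τ) / (τ' - τ) ∈ Set.Ico 0 1 ∧ (t - τ) / (τ' - τ) + k ∈ Set.Ico s e := by
  have hΔ : 0 < τ' - τ := sub_pos.mpr h
  set x := (t - τ) / (τ' - τ)
  have ht : t = τ + x * (τ' - τ) := by simp only [x]; field_simp; ring
  rw [wrapSlot, ht]
  simp only [Set.mem_Ico, add_le_add_iff_left, add_lt_add_iff_left,
    mul_le_mul_iff_of_pos_right hΔ, mul_lt_mul_iff_of_pos_right hΔ, sub_le_iff_le_add,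
    lt_sub_iff_add_lt, max_le_iff, lt_min_iff]
  constructor
  · rintro ⟨⟨h1, h2⟩, h3, h4⟩
    exact ⟨⟨by linarith, by linarith⟩, h1, h3⟩
  · rintro ⟨⟨h1, h2⟩, h3, h4⟩
    exact ⟨⟨h3, by linarith⟩, h4, by linarith⟩

lemma integral_indicator (h : τ < τ') (hse : s ≤ e) (k : ℕ) :
    ∫ t in τ..τ', (wrapSlot τ τ' s e k).indicator 1 t
      = (τ' - τ) * (min (max ((k : ℝ) + 1) s) e - min (max (k : ℝ) s) e) := by
  have hΔ : 0 < τ' - τ := sub_pos.mpr h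
  have hstart : τ ≤ τ + (max s k - k) * (τ' - τ) :=
    le_add_of_nonneg_right (mul_nonneg (sub_nonneg.mpr (le_max_right _ _)) hΔ.le)
  have hend : τ + (min e (k + 1) - k) * (τ' - τ) ≤ τ' := by
    have : (min e (k + 1) - k) * (τ' - τ) ≤ 1 * (τ' - τ) :=
      mul_le_mul_of_nonneg_right (by linarith [min_le_right e ((k : ℝ) + 1)]) hΔ.le
    linarith
  rw [wrapSlot, intervalIntegral_indicator_Ico_one h.le hstart hend,
    min_max_sub_min_max hse (by linarith), mul_max_of_nonneg _ _ hΔ.le, mul_zero]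
  ring_nf

lemma integral_sum_indicator (h : τ < τ') (hs : 0 ≤ s) (hse : s ≤ e) {m : ℕ} (hem : e ≤ m) :
    ∫ t in τ..τ', ∑ k : Fin m, (wrapSlot τ τ' s e k).indicator 1 t = (τ' - τ) * (e - s) := by
  have hint (k : ℕ) : IntervalIntegrable ((wrapSlot τ τ' s e k).indicator 1) volume τ τ' :=
    intervalIntegrable_iff.mpr
      ((integrableOn_const (C := (1 : ℝ)) (by simp)).indicator measurableSet_Ico)
  have htele := Finset.sum_range_sub (fun j : ℕ => min (max (j : ℝ) s) e) m
  push_cast at htele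
  rw [intervalIntegral.integral_finsetSum fun (k : Fin m) _ => hint k]
  simp only [integral_indicator h hse, ← Finset.mul_sum]
  rw [Fin.sum_univ_eq_sum_range (fun k : ℕ => min (max ((k : ℝ) + 1) s) e - min (max (k : ℝ) s) e),
    htele, max_eq_left (hse.trans hem), min_eq_right hem, max_eq_right hs, min_eq_left hse]

end wrapSlot

def mcNaughtonSlot {α β : Type*} [Fintype α] [LinearOrder α] [Fintype β] [LinearOrder β]
    (τ τ' : ℝ) (w : α → β → ℝ) (i : α) (k : ℕ) (q : β) : Set ℝ :=
  wrapSlot τ τ' (lexPrefixSum w (i, q)) (lexPrefixSum w (i, q) + w i q) k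

namespace mcNaughtonSlot

variable {α β : Type*} [Fintype α] [LinearOrder α] [Fintype β] [LinearOrder β]
  {τ τ' : ℝ} {w : α → β → ℝ}

lemma sum_indicator_task_le_one (hw : ∀ i q, 0 ≤ w i q) {i : α} (hw1 : ∑ q, w i q ≤ 1)
    (h : τ < τ') (m : ℕ) (t : ℝ) :
    ∑ k : Fin m, ∑ q, (mcNaughtonSlot τ τ' w i k q).indicator (1 : ℝ → ℝ) t ≤ 1 := by
  have hwindow (q : β) := (lexPrefixSum.Ico_subset_Ico_row hw i q).trans (Set.Ico_subset_Ico_right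
    (add_le_add_right hw1 (prefixSum (fun j => ∑ r, w j r) i)))
  simp only [← Fintype.sum_prod_type']
  refine sum_indicator_one_le_one _ t fun ⟨k, q⟩ ⟨k', q'⟩ hkq hkq' => ?_
  rw [mcNaughtonSlot, wrapSlot.mem_iff h] at hkq hkq'
  obtain rfl : k = k' := Fin.ext (Nat.eq_of_add_mem_Ico (hwindow q hkq.2) (hwindow q' hkq'.2))
  obtain ⟨-, rfl⟩ := Prod.mk.inj (lexPrefixSum.eq_of_mem_Ico hw hkq.2 hkq'.2)
  rfl

lemma sum_indicator_processor_le_one (hw : ∀ i q, 0 ≤ w i q) (h : τ < τ') (k : ℕ) (t : ℝ) :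
    ∑ i, ∑ q, (mcNaughtonSlot τ τ' w i k q).indicator (1 : ℝ → ℝ) t ≤ 1 := by
  simp only [← Fintype.sum_prod_type']
  refine sum_indicator_one_le_one _ t fun p p' hp hp' => ?_
  rw [mcNaughtonSlot, wrapSlot.mem_iff h] at hp hp'
  exact lexPrefixSum.eq_of_mem_Ico hw hp.2 hp'.2

lemma integral_sum_indicator (hw : ∀ i q, 0 ≤ w i q) {m : ℕ} (hwm : ∑ i, ∑ q, w i q ≤ m)
    (h : τ < τ') (i : α) (q : β) :
    ∫ t in τ..τ', ∑ k : Fin m, (mcNaughtonSlot τ τ' w i k q).indicator (1 : ℝ → ℝ) t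
      = (τ' - τ) * w i q := by
  simp only [mcNaughtonSlot]
  rw [wrapSlot.integral_sum_indicator h (lexPrefixSum.nonneg hw _)
    (le_add_of_nonneg_right (hw i q)) ((lexPrefixSum.add_le_sum hw i q).trans hwm),
    add_sub_cancel_left]

end mcNaughtonSlot

/-- McNaughton's wrap-around construction on a single event interval: flattening the pairs
(task, speed level) lexicographically and cutting the concatenated workload line at the
integers yields a feasible binary schedule whose per-(task, speed) execution times match the
fractional solution. Chunk k (0-indexed) of the workload line is assigned to processor k. -/
theorem stmt16 (n ℓ m : ℕ) (τμ τμ1 : ℝ) (hτ : τμ < τμ1)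
    (w : Fin n → Fin ℓ → ℝ)
    (hwb : ∀ i q, 0 ≤ w i q)
    (hw1 : ∀ i, (∑ q, w i q) ≤ 1)
    (hwm : (∑ i, ∑ q, w i q) ≤ (m : ℝ))
    (S : Fin n × Fin ℓ → ℝ)
    (hS : ∀ p, S p = ∑ p' ∈ Finset.univ.filter
      (fun p' : Fin n × Fin ℓ => p'.1 < p.1 ∨ (p'.1 = p.1 ∧ p'.2 < p.2)), w p'.1 p'.2)
    (a : Fin n → Fin m → Fin ℓ → ℝ → ℝ)
    (ha : ∀ i k q t, a i k q t =
      if τμ + (max (S (i, q)) (k : ℝ) - (k : ℝ)) * (τμ1 - τμ) ≤ t ∧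
         t < τμ + (min (S (i, q) + w i q) ((k : ℝ) + 1) - (k : ℝ)) * (τμ1 - τμ)
      then 1 else 0) :
    (∀ i, ∀ᵐ t ∂volume, t ∈ Set.Icc τμ τμ1 → (∑ k, ∑ q, a i k q t) ≤ 1) ∧
    (∀ k, ∀ᵐ t ∂volume, t ∈ Set.Icc τμ τμ1 → (∑ i, ∑ q, a i k q t) ≤ 1) ∧
    (∀ i q, (∫ t in τμ..τμ1, ∑ k, a i k q t) = (τμ1 - τμ) * w i q) := by
  obtain rfl : S = lexPrefixSum w :=
    funext fun p => (hS p).trans (lexPrefixSum.eq_sum_filter w p).symm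
  have hslot : ∀ i k q t, a i k q t = (mcNaughtonSlot τμ τμ1 w i k q).indicator 1 t := by
    classical
    intro i k q t
    rw [ha, Set.indicator_apply]
    simp only [mcNaughtonSlot, wrapSlot, Set.mem_Ico, Pi.one_apply]
  simp only [hslot]
  exact ⟨fun i => .of_forall fun t _ =>
      mcNaughtonSlot.sum_indicator_task_le_one hwb (hw1 i) hτ m t,
    fun k => .of_forall fun t _ => mcNaughtonSlot.sum_indicator_processor_le_one hwb hτ k t,
    mcNaughtonSlot.integral_sum_indicator hwb hwm hτ⟩
end

section
/- The optimal values of the continuous-time binary scheduling problem (minimize ∫∑_{i,k,q} a_{ik}^q(t) c^q dt over binary measurable assignments satisfying the flow dynamics, boundary conditions, and the per-task and per-processor exclusivity constraints) and the discrete-time LP (minimize ∑_{μ,i,q}(τ_{μ+1}−τ_μ) w_i^q[μ] c^q over the LP-DVFS feasible set) are equal, provided the event times τ_μ include all arrival times and deadlines. -/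
/-!
Averaging a binary schedule over each event interval `[τ μ, τ (μ + 1)]` gives a point of the LP
with the same cost: work and cost on an interval are linear in the time averages `w_i^q`, and the
exclusivity constraints bound these averages as the LP requires. Conversely, after discarding the
LP workload outside each task's window (which only lowers the cost, as `c > 0`), each interval of
length `Δ` is scheduled by McNaughton's wrap-around rule: the processing times `Δ w_i^q` are laid
end to end on `[0, m Δ]`, task by task, and cut into `m` strips of length `Δ`, one per processor.
A task never runs on two processors at once because its total time in the interval is at most `Δ`.
So every value of either problem is bounded below by a value of the other, and the infima agree.
-/

open MeasureTheory Set Finset Function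

section Blocks

variable {ι : Type*} [Fintype ι] [LinearOrder ι] {d : ι → ℝ}

def blockStart (d : ι → ℝ) (i : ι) : ℝ := ∑ j ∈ univ.filter (· < i), d j

def block (d : ι → ℝ) (i : ι) : Set ℝ := Ioc (blockStart d i) (blockStart d i + d i)

lemma blockStart_nonneg (hd : ∀ i, 0 ≤ d i) (i : ι) : 0 ≤ blockStart d i :=
  sum_nonneg fun j _ => hd j

lemma blockStart_add_self (i : ι) :
    blockStart d i + d i = ∑ j ∈ univ.filter (· ≤ i), d j := by
  rw [blockStart, add_comm, ← sum_insert (by simp)]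
  congr 1
  ext j
  simp [le_iff_lt_or_eq, or_comm]

lemma blockStart_add_le_sum (hd : ∀ i, 0 ≤ d i) (i : ι) : blockStart d i + d i ≤ ∑ j, d j := by
  rw [blockStart_add_self]
  exact sum_le_sum_of_subset_of_nonneg (subset_univ _) fun j _ _ => hd j

lemma blockStart_add_le_of_lt (hd : ∀ i, 0 ≤ d i) {i j : ι} (h : i < j) :
    blockStart d i + d i ≤ blockStart d j := by
  rw [blockStart_add_self]
  refine sum_le_sum_of_subset_of_nonneg (fun x hx => ?_) fun x _ _ => hd x
  simp only [mem_filter, Finset.mem_univ, true_and] at hx ⊢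
  exact hx.trans_lt h

lemma block_subset_Ioc_sum (hd : ∀ i, 0 ≤ d i) (i : ι) : block d i ⊆ Ioc 0 (∑ j, d j) :=
  Ioc_subset_Ioc (blockStart_nonneg hd i) (blockStart_add_le_sum hd i)

lemma pairwise_disjoint_block (hd : ∀ i, 0 ≤ d i) : Pairwise (Disjoint on block d) := by
  intro i j hij
  rcases hij.lt_or_gt with h | h
  · exact Ioc_disjoint_Ioc_of_le (blockStart_add_le_of_lt hd h)
  · exact (Ioc_disjoint_Ioc_of_le (blockStart_add_le_of_lt hd h)).symm

end Blocks

lemma intervalIntegrable_indicator_one {S : Set ℝ} (hS : MeasurableSet S) (u v : ℝ) :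
    IntervalIntegrable (S.indicator (1 : ℝ → ℝ)) volume u v :=
  intervalIntegrable_iff.2 ((integrableOn_const (by simp)).indicator hS)

lemma integral_indicator_one_of_subset {S : Set ℝ} (hS : MeasurableSet S) {u v : ℝ} (huv : u ≤ v)
    (hSuv : S ⊆ Ioc u v) : ∫ t in u..v, S.indicator 1 t = volume.real S := by
  rw [intervalIntegral.integral_of_le huv, setIntegral_indicator hS, inter_eq_right.2 hSuv]
  simp

lemma integral_indicator_Ioo_inter (S : Set ℝ) {u v : ℝ} (huv : u ≤ v) :
    ∫ t in u..v, (Ioo u v ∩ S).indicator 1 t = ∫ t in u..v, S.indicator (1 : ℝ → ℝ) t := by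
  rw [intervalIntegral.integral_of_le huv, intervalIntegral.integral_of_le huv,
    integral_Ioc_eq_integral_Ioo, integral_Ioc_eq_integral_Ioo]
  refine setIntegral_congr_fun measurableSet_Ioo fun t ht => ?_
  rw [← indicator_indicator, indicator_of_mem ht]

lemma sum_integral_comp_sub_add_mul (f : ℝ → ℝ) (hf : ∀ x y, IntervalIntegrable f volume x y)
    (u Δ : ℝ) (m : ℕ) :
    ∑ k : Fin m, ∫ t in u..u + Δ, f (t - u + k * Δ) = ∫ p in 0..m * Δ, f p := by
  have hshift : ∀ k : ℕ,
      ∫ t in u..u + Δ, f (t - u + k * Δ) = ∫ p in k * Δ..(k + 1 : ℕ) * Δ, f p := fun k => by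
    simp_rw [sub_add_eq_add_sub, add_sub_assoc]
    rw [intervalIntegral.integral_comp_add_right]
    congr 1 <;> push_cast <;> ring
  rw [Fin.sum_univ_eq_sum_range (fun k => ∫ t in u..u + Δ, f (t - u + k * Δ)),
    sum_congr rfl fun k _ => hshift k,
    intervalIntegral.sum_integral_adjacent_intervals fun k _ => hf _ _, Nat.cast_zero, zero_mul]

section McNaughton

variable {ι Q : Type*} [Fintype ι] [LinearOrder ι] [Fintype Q] [LinearOrder Q] {d : ι → Q → ℝ}

/-- The pieces `d i q` laid end to end on `[0, ∑ d]`, task by task. -/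
def wrapSegment (d : ι → Q → ℝ) (i : ι) (q : Q) : Set ℝ :=
  (· - blockStart (fun j => ∑ q, d j q) i) ⁻¹' block (d i) q

/-- McNaughton's wrap-around rule: on `(u, u + Δ)` processor `k` runs at time `u + r` the piece
lying over `k * Δ + r`. The interval is open so that the sets of adjacent event intervals stay
apart even at their common endpoint. -/
def mcNaughtonSet (d : ι → Q → ℝ) (u Δ : ℝ) (i : ι) (k : ℕ) (q : Q) : Set ℝ :=
  Ioo u (u + Δ) ∩ (fun t => t - u + k * Δ) ⁻¹' wrapSegment d i q

lemma wrapSegment_eq (d : ι → Q → ℝ) (i : ι) (q : Q) :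
    wrapSegment d i q = Ioc (blockStart (d i) q + blockStart (fun j => ∑ q, d j q) i)
      (blockStart (d i) q + d i q + blockStart (fun j => ∑ q, d j q) i) :=
  preimage_sub_const_Ioc _ _ _

lemma measurableSet_wrapSegment (d : ι → Q → ℝ) (i : ι) (q : Q) :
    MeasurableSet (wrapSegment d i q) := by
  rw [wrapSegment_eq]
  exact measurableSet_Ioc

lemma wrapSegment_subset_block (hd : ∀ i q, 0 ≤ d i q) (i : ι) (q : Q) :
    wrapSegment d i q ⊆ block (fun j => ∑ q, d j q) i := by
  intro p hp
  have hpq := block_subset_Ioc_sum (hd i) q hp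
  simp only [block, Set.mem_Ioc] at hpq ⊢
  constructor <;> linarith

lemma pairwise_disjoint_wrapSegment (hd : ∀ i q, 0 ≤ d i q) :
    Pairwise (Disjoint on fun p : ι × Q => wrapSegment d p.1 p.2) := by
  rintro ⟨i, q⟩ ⟨i', q'⟩ hne
  by_cases hi : i = i'
  · subst hi
    have hq : q ≠ q' := fun h => hne (by rw [h])
    exact (pairwise_disjoint_block (hd i) hq).preimage _
  · exact (pairwise_disjoint_block (fun j => sum_nonneg fun q _ => hd j q) hi).mono
      (wrapSegment_subset_block hd i q) (wrapSegment_subset_block hd i' q')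

variable (u Δ : ℝ)

lemma measurableSet_mcNaughtonSet (i : ι) (k : ℕ) (q : Q) :
    MeasurableSet (mcNaughtonSet d u Δ i k q) :=
  measurableSet_Ioo.inter ((measurableSet_wrapSegment d i q).preimage (by fun_prop))

lemma mcNaughtonSet_subset (i : ι) (k : ℕ) (q : Q) : mcNaughtonSet d u Δ i k q ⊆ Ioo u (u + Δ) :=
  inter_subset_left

lemma mcNaughtonSet_eq_empty {i : ι} {q : Q} (h : d i q = 0) (k : ℕ) :
    mcNaughtonSet d u Δ i k q = ∅ := by
  rw [mcNaughtonSet, wrapSegment_eq, h, add_zero, Set.Ioc_self, Set.preimage_empty, inter_empty]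

lemma pairwise_disjoint_mcNaughtonSet_processor (hd : ∀ i q, 0 ≤ d i q) (k : ℕ) :
    Pairwise (Disjoint on fun p : ι × Q => mcNaughtonSet d u Δ p.1 k p.2) := fun _ _ h =>
  ((pairwise_disjoint_wrapSegment hd h).preimage _).mono inter_subset_right inter_subset_right

/-- Distinct processors run points of the line that are at least `Δ` apart, while all the pieces of
one task lie in a block of length at most `Δ`. -/
lemma pairwise_disjoint_mcNaughtonSet_task (hd : ∀ i q, 0 ≤ d i q) (hΔ : ∀ i, ∑ q, d i q ≤ Δ)
    (i : ι) (m : ℕ) :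
    Pairwise (Disjoint on fun p : Fin m × Q => mcNaughtonSet d u Δ i p.1 p.2) := by
  rintro ⟨k, q⟩ ⟨k', q'⟩ hne
  by_cases hk : k = k'
  · subst hk
    have hq : (i, q) ≠ (i, q') := fun h => hne (by simp_all)
    exact ((pairwise_disjoint_wrapSegment hd hq).preimage _).mono inter_subset_right
      inter_subset_right
  · rw [onFun, Set.disjoint_left]
    rintro t ⟨-, ht⟩ ⟨-, ht'⟩
    have h := wrapSegment_subset_block hd i q ht
    have h' := wrapSegment_subset_block hd i q' ht'
    simp only [block, Set.mem_Ioc] at h h'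
    have hΔpos : 0 < Δ := by linarith [hΔ i]
    rcases Fin.lt_or_lt_of_ne hk with hlt | hlt
    · have : ((k : ℕ) : ℝ) + 1 ≤ (k' : ℕ) := by exact_mod_cast hlt
      nlinarith [hΔ i]
    · have : ((k' : ℕ) : ℝ) + 1 ≤ (k : ℕ) := by exact_mod_cast hlt
      nlinarith [hΔ i]

lemma sum_integral_mcNaughtonSet (hd : ∀ i q, 0 ≤ d i q) (hΔ : 0 ≤ Δ) {m : ℕ}
    (htot : ∑ i, ∑ q, d i q ≤ m * Δ) (i : ι) (q : Q) :
    ∑ k : Fin m, ∫ t in u..u + Δ, (mcNaughtonSet d u Δ i k q).indicator 1 t = d i q := by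
  have hW := measurableSet_wrapSegment d i q
  have hWsub : wrapSegment d i q ⊆ Ioc 0 (m * Δ) :=
    ((wrapSegment_subset_block hd i q).trans
      (block_subset_Ioc_sum (fun j => sum_nonneg fun q _ => hd j q) i)).trans
      (Ioc_subset_Ioc_right htot)
  calc ∑ k : Fin m, ∫ t in u..u + Δ, (mcNaughtonSet d u Δ i k q).indicator 1 t
      = ∑ k : Fin m, ∫ t in u..u + Δ, (wrapSegment d i q).indicator 1 (t - u + k * Δ) := by
        refine sum_congr rfl fun k _ => ?_
        rw [mcNaughtonSet, integral_indicator_Ioo_inter _ (by linarith)]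
        rfl
    _ = ∫ p in 0..m * Δ, (wrapSegment d i q).indicator 1 p :=
        sum_integral_comp_sub_add_mul _ (fun _ _ => intervalIntegrable_indicator_one hW _ _) u Δ m
    _ = volume.real (wrapSegment d i q) :=
        integral_indicator_one_of_subset hW (by positivity) hWsub
    _ = d i q := by
        rw [wrapSegment_eq, Real.volume_real_Ioc_of_le (by linarith [hd i q])]
        ring

end McNaughton

lemma Pairwise.disjoint_iUnion_of_subset {α M J : Type*} {C : M → Set α} {F : M → J → Set α}
    (hC : Pairwise (Disjoint on C)) (hFC : ∀ μ j, F μ j ⊆ C μ)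
    (hF : ∀ μ, Pairwise (Disjoint on F μ)) : Pairwise (Disjoint on fun j => ⋃ μ, F μ j) := by
  intro j j' hj
  simp only [onFun, Set.disjoint_iUnion_left, Set.disjoint_iUnion_right]
  intro μ' μ
  by_cases hμ : μ = μ'
  · subst hμ
    exact hF μ hj
  · exact (hC hμ).mono (hFC μ j) (hFC μ' j')

lemma sum_indicator_one_le_one_s17 {α J : Type*} [Fintype J] {S : J → Set α}
    (hS : Pairwise (Disjoint on S)) (t : α) : ∑ j, (S j).indicator (1 : α → ℝ) t ≤ 1 := by
  rw [← Finset.indicator_biUnion_apply _ _ (hS.set_pairwise _)]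
  exact indicator_apply_le' (fun _ => le_rfl) fun _ => zero_le_one

section EventIntervals

variable {N : ℕ} {τ : Fin (N + 1) → ℝ}

lemma sum_filter_succ_sub_castSucc {M : Type*} [AddCommGroup M] (F : Fin (N + 1) → M)
    {p r : Fin (N + 1)} (hpr : p ≤ r) :
    ∑ μ ∈ univ.filter (fun μ : Fin N => (p : ℕ) ≤ μ ∧ (μ : ℕ) < r), (F μ.succ - F μ.castSucc)
      = F r - F p := by
  set G : ℕ → M := fun j => F (Fin.clamp j N)
  have hG : ∀ μ : Fin (N + 1), G μ = F μ := fun μ =>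
    congrArg F (Fin.ext (by simp [Fin.clamp, Nat.lt_succ_iff.1 μ.isLt]))
  rw [← hG r, ← hG p, ← sum_Ico_sub G hpr]
  refine sum_nbij (fun μ => (μ : ℕ)) (fun μ hμ => by simpa using hμ)
    (fun μ _ μ' _ h => Fin.ext h) (fun j hj => ?_) fun μ _ => ?_
  · have hjr : j < r := (Finset.mem_Ico.1 hj).2
    exact ⟨⟨j, by omega⟩, by simpa using Finset.mem_Ico.1 hj, rfl⟩
  · simp only [← hG, Fin.val_succ, Fin.val_castSucc]

lemma sum_integral_eventIntervals (τ : Fin (N + 1) → ℝ) {f : ℝ → ℝ}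
    (hf : ∀ x y, IntervalIntegrable f volume x y) {p r : Fin (N + 1)} (hpr : p ≤ r) :
    ∑ μ ∈ univ.filter (fun μ : Fin N => (p : ℕ) ≤ μ ∧ (μ : ℕ) < r),
      ∫ t in τ μ.castSucc..τ μ.succ, f t = ∫ t in τ p..τ r, f t := by
  have h := sum_filter_succ_sub_castSucc (fun j => ∫ t in τ 0..τ j, f t) hpr
  simpa only [intervalIntegral.integral_interval_sub_left (hf _ _) (hf _ _)] using h

lemma sum_integral_eventIntervals_univ (τ : Fin (N + 1) → ℝ) {f : ℝ → ℝ}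
    (hf : ∀ x y, IntervalIntegrable f volume x y) :
    ∑ μ : Fin N, ∫ t in τ μ.castSucc..τ μ.succ, f t = ∫ t in τ 0..τ (Fin.last N), f t := by
  rw [← sum_integral_eventIntervals τ hf (Fin.zero_le _)]
  congr 1
  ext μ
  simp

lemma succ_sub_castSucc_nonneg (hτ : StrictMono τ) (μ : Fin N) : 0 ≤ τ μ.succ - τ μ.castSucc :=
  sub_nonneg.2 (hτ.monotone (Fin.castSucc_le_succ μ))

lemma eq_of_mem_Ioo_of_mem_Icc (hτ : StrictMono τ) {μ ν : Fin N} {t : ℝ}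
    (hμ : t ∈ Ioo (τ μ.castSucc) (τ μ.succ)) (hν : t ∈ Icc (τ ν.castSucc) (τ ν.succ)) : μ = ν := by
  by_contra hne
  rcases Fin.lt_or_lt_of_ne hne with h | h
  · linarith [hμ.2, hν.1, hτ.monotone (Fin.succ_le_castSucc_iff.2 h)]
  · linarith [hμ.1, hν.2, hτ.monotone (Fin.succ_le_castSucc_iff.2 h)]

lemma pairwise_disjoint_Ioo_eventIntervals (hτ : StrictMono τ) :
    Pairwise (Disjoint on fun μ : Fin N => Ioo (τ μ.castSucc) (τ μ.succ)) := fun _ _ hne =>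
  Set.disjoint_left.2 fun _ hμ hν => hne (eq_of_mem_Ioo_of_mem_Icc hτ hμ (Ioo_subset_Icc_self hν))

lemma integral_indicator_iUnion_eventIntervals (hτ : StrictMono τ) {F : Fin N → Set ℝ}
    (hF : ∀ μ, F μ ⊆ Ioo (τ μ.castSucc) (τ μ.succ)) (μ : Fin N) :
    ∫ t in τ μ.castSucc..τ μ.succ, (⋃ ν, F ν).indicator 1 t =
      ∫ t in τ μ.castSucc..τ μ.succ, (F μ).indicator (1 : ℝ → ℝ) t := by
  refine intervalIntegral.integral_congr fun t ht => ?_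
  rw [uIcc_of_le (hτ.monotone (Fin.castSucc_le_succ μ))] at ht
  have hmem : t ∈ ⋃ ν, F ν ↔ t ∈ F μ := by
    refine ⟨fun h => ?_, fun h => mem_iUnion_of_mem μ h⟩
    obtain ⟨ν, hν⟩ := mem_iUnion.1 h
    rwa [eq_of_mem_Ioo_of_mem_Icc hτ (hF ν hν) ht] at hν
  by_cases htF : t ∈ F μ
  · rw [indicator_of_mem htF, indicator_of_mem (hmem.2 htF)]
  · rw [indicator_of_notMem htF, indicator_of_notMem (mt hmem.1 htF)]

end EventIntervals

section Averaging

variable {ι κ Q : Type*} [Fintype κ] [Fintype Q] {u v : ℝ}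

lemma intervalIntegrable_fun_sum {J : Type*} [Fintype J] {f : J → ℝ → ℝ}
    (hf : ∀ j, IntervalIntegrable (f j) volume u v) :
    IntervalIntegrable (fun t => ∑ j, f j t) volume u v := by
  simpa only [Finset.sum_fn] using IntervalIntegrable.sum univ fun j _ => hf j

lemma intervalIntegrable_of_binary {f : ℝ → ℝ} (hf : Measurable f)
    (h01 : ∀ t, f t = 0 ∨ f t = 1) : IntervalIntegrable f volume u v :=
  (intervalIntegrable_const (c := (1 : ℝ))).mono_fun hf.aestronglyMeasurable
    (ae_of_all _ fun t => by rcases h01 t with h | h <;> simp [h])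

lemma intervalIntegrable_sum_sum_mul {a : κ → Q → ℝ → ℝ}
    (ha : ∀ k q, IntervalIntegrable (a k q) volume u v) (s : Q → ℝ) :
    IntervalIntegrable (fun t => ∑ k, ∑ q, s q * a k q t) volume u v :=
  intervalIntegrable_fun_sum fun k => intervalIntegrable_fun_sum fun q => (ha k q).const_mul (s q)

lemma intervalIntegrable_sum_sum_sum_mul [Fintype ι] {a : ι → κ → Q → ℝ → ℝ}
    (ha : ∀ i k q, IntervalIntegrable (a i k q) volume u v) (c : Q → ℝ) :
    IntervalIntegrable (fun t => ∑ i, ∑ k, ∑ q, a i k q t * c q) volume u v :=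
  intervalIntegrable_fun_sum fun i => intervalIntegrable_fun_sum fun k =>
    intervalIntegrable_fun_sum fun q => (ha i k q).mul_const (c q)

lemma integral_sum_sum_mul {a : κ → Q → ℝ → ℝ} (ha : ∀ k q, IntervalIntegrable (a k q) volume u v)
    (s : Q → ℝ) :
    ∫ t in u..v, ∑ k, ∑ q, s q * a k q t = ∑ q, s q * ∫ t in u..v, ∑ k, a k q t := by
  have hpt : ∀ t, ∑ k, ∑ q, s q * a k q t = ∑ q, s q * ∑ k, a k q t := fun t => by
    rw [Finset.sum_comm]
    simp_rw [Finset.mul_sum]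
  simp_rw [hpt]
  rw [intervalIntegral.integral_finsetSum fun q _ =>
    (intervalIntegrable_fun_sum fun k => ha k q).const_mul (s q)]
  simp_rw [intervalIntegral.integral_const_mul]

lemma integral_sum_sum_sum_mul [Fintype ι] {a : ι → κ → Q → ℝ → ℝ}
    (ha : ∀ i k q, IntervalIntegrable (a i k q) volume u v) (c : Q → ℝ) :
    ∫ t in u..v, ∑ i, ∑ k, ∑ q, a i k q t * c q =
      ∑ i, ∑ q, (∫ t in u..v, ∑ k, a i k q t) * c q := by
  rw [intervalIntegral.integral_finsetSum fun i _ => intervalIntegrable_fun_sum fun k =>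
    intervalIntegrable_fun_sum fun q => (ha i k q).mul_const (c q)]
  refine sum_congr rfl fun i _ => ?_
  simp_rw [mul_comm _ (c _)]
  exact integral_sum_sum_mul (ha i) c

lemma sub_mul_interval_average (huv : u ≠ v) (f : ℝ → ℝ) :
    (v - u) * ⨍ t in u..v, f t = ∫ t in u..v, f t := by
  rw [interval_average_eq_div, mul_div_cancel₀ _ (sub_ne_zero.2 huv.symm)]

lemma interval_average_finsetSum {J : Type*} [Fintype J] {f : J → ℝ → ℝ}
    (hf : ∀ j, IntervalIntegrable (f j) volume u v) :
    ⨍ t in u..v, ∑ j, f j t = ∑ j, ⨍ t in u..v, f j t := by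
  simp only [interval_average_eq, intervalIntegral.integral_finsetSum fun j _ => hf j,
    Finset.smul_sum]

lemma interval_average_le_of_le (huv : u < v) {f : ℝ → ℝ} (hf : IntervalIntegrable f volume u v)
    {C : ℝ} (h : ∀ t, f t ≤ C) : ⨍ t in u..v, f t ≤ C := by
  rw [interval_average_eq_div, div_le_iff₀ (sub_pos.2 huv)]
  calc ∫ t in u..v, f t ≤ ∫ _ in u..v, C :=
        intervalIntegral.integral_mono_on huv.le hf intervalIntegrable_const fun t _ => h t
    _ = C * (v - u) := by simp [mul_comm]

lemma interval_average_nonneg (huv : u ≤ v) {f : ℝ → ℝ} (h : ∀ t, 0 ≤ f t) :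
    0 ≤ ⨍ t in u..v, f t := by
  rw [interval_average_eq_div]
  exact div_nonneg (intervalIntegral.integral_nonneg huv fun t _ => h t) (sub_nonneg.2 huv)

/-- The paper's fractional workload `w_i^q`: the time average over `[u, v]` of the number of
processors running task `i` at speed level `q`. -/
noncomputable def averageLoad (a : ι → κ → Q → ℝ → ℝ) (u v : ℝ) (i : ι) (q : Q) : ℝ :=
  ⨍ t in u..v, ∑ k, a i k q t

variable {a : ι → κ → Q → ℝ → ℝ}

lemma integral_work_eq_averageLoad (ha : ∀ i k q, IntervalIntegrable (a i k q) volume u v)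
    (huv : u ≠ v) (s : Q → ℝ) (i : ι) :
    ∫ t in u..v, ∑ k, ∑ q, s q * a i k q t = (v - u) * ∑ q, s q * averageLoad a u v i q := by
  rw [integral_sum_sum_mul (ha i) s, Finset.mul_sum]
  refine sum_congr rfl fun q _ => ?_
  rw [averageLoad, ← sub_mul_interval_average huv]
  ring

lemma integral_cost_eq_averageLoad [Fintype ι]
    (ha : ∀ i k q, IntervalIntegrable (a i k q) volume u v) (huv : u ≠ v) (c : Q → ℝ) :
    ∫ t in u..v, ∑ i, ∑ k, ∑ q, a i k q t * c q =
      ∑ i, ∑ q, (v - u) * averageLoad a u v i q * c q := by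
  simp_rw [integral_sum_sum_sum_mul ha c, averageLoad, sub_mul_interval_average huv]

lemma sum_averageLoad_le_one (ha : ∀ i k q, IntervalIntegrable (a i k q) volume u v)
    (huv : u < v) (i : ι) (htask : ∀ t, ∑ k, ∑ q, a i k q t ≤ 1) :
    ∑ q, averageLoad a u v i q ≤ 1 := by
  have hint := fun q => intervalIntegrable_fun_sum fun k => ha i k q
  simp only [averageLoad]
  rw [← interval_average_finsetSum hint]
  exact interval_average_le_of_le huv (intervalIntegrable_fun_sum hint) fun t => by
    rw [Finset.sum_comm]
    exact htask t

lemma sum_sum_averageLoad_le_card [Fintype ι]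
    (ha : ∀ i k q, IntervalIntegrable (a i k q) volume u v) (huv : u < v)
    (hproc : ∀ k t, ∑ i, ∑ q, a i k q t ≤ 1) :
    ∑ i, ∑ q, averageLoad a u v i q ≤ Fintype.card κ := by
  have hint := fun i q => intervalIntegrable_fun_sum fun k => ha i k q
  simp_rw [averageLoad, ← interval_average_finsetSum (hint _),
    ← interval_average_finsetSum fun i => intervalIntegrable_fun_sum (hint i)]
  refine interval_average_le_of_le huv (intervalIntegrable_fun_sum fun i =>
    intervalIntegrable_fun_sum (hint i)) fun t => ?_
  calc ∑ i, ∑ q, ∑ k, a i k q t = ∑ i, ∑ k, ∑ q, a i k q t :=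
        sum_congr rfl fun i _ => Finset.sum_comm
    _ = ∑ k, ∑ i, ∑ q, a i k q t := Finset.sum_comm
    _ ≤ ∑ _k : κ, (1 : ℝ) := sum_le_sum fun k _ => hproc k t
    _ = Fintype.card κ := by simp

lemma averageLoad_mem_Icc (ha : ∀ i k q, IntervalIntegrable (a i k q) volume u v)
    (huv : u < v) (hnn : ∀ i k q t, 0 ≤ a i k q t)
    (htask : ∀ i t, ∑ k, ∑ q, a i k q t ≤ 1) (i : ι) (q : Q) :
    0 ≤ averageLoad a u v i q ∧ averageLoad a u v i q ≤ 1 := by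
  refine ⟨interval_average_nonneg huv.le fun t => sum_nonneg fun k _ => hnn i k q t,
    interval_average_le_of_le huv (intervalIntegrable_fun_sum fun k => ha i k q) fun t => ?_⟩
  calc ∑ k, a i k q t ≤ ∑ k, ∑ q', a i k q' t :=
        sum_le_sum fun k _ => single_le_sum (fun q' _ => hnn i k q' t) (Finset.mem_univ q)
    _ ≤ 1 := htask i t

end Averaging

section Realization

variable {N : ℕ} {ι Q : Type*} [Fintype ι] [LinearOrder ι] [Fintype Q] [LinearOrder Q]
  {τ : Fin (N + 1) → ℝ} {D : Fin N → ι → Q → ℝ}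

noncomputable def mcNaughtonSchedule (τ : Fin (N + 1) → ℝ) (D : Fin N → ι → Q → ℝ) (i : ι)
    (k : ℕ) (q : Q) : ℝ → ℝ :=
  (⋃ μ, mcNaughtonSet (D μ) (τ μ.castSucc) (τ μ.succ - τ μ.castSucc) i k q).indicator 1

lemma mcNaughtonSet_subset_eventInterval (μ : Fin N) (i : ι) (k : ℕ) (q : Q) :
    mcNaughtonSet (D μ) (τ μ.castSucc) (τ μ.succ - τ μ.castSucc) i k q ⊆
      Ioo (τ μ.castSucc) (τ μ.succ) := by
  have h := mcNaughtonSet_subset (d := D μ) (τ μ.castSucc) (τ μ.succ - τ μ.castSucc) i k q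
  rwa [add_sub_cancel] at h

lemma measurable_mcNaughtonSchedule (i : ι) (k : ℕ) (q : Q) :
    Measurable (mcNaughtonSchedule τ D i k q) :=
  measurable_const.indicator (MeasurableSet.iUnion fun _ => measurableSet_mcNaughtonSet _ _ _ _ _)

lemma mcNaughtonSchedule_eq_zero_or_one (i : ι) (k : ℕ) (q : Q) (t : ℝ) :
    mcNaughtonSchedule τ D i k q t = 0 ∨ mcNaughtonSchedule τ D i k q t = 1 :=
  indicator_eq_zero_or_self _ _ _

lemma mcNaughtonSchedule_eq_zero {i : ι} {q : Q} {t : ℝ}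
    (ht : ∀ μ, D μ i q ≠ 0 → t ∉ Ioo (τ μ.castSucc) (τ μ.succ)) (k : ℕ) :
    mcNaughtonSchedule τ D i k q t = 0 := by
  refine indicator_of_notMem (fun h => ?_) _
  obtain ⟨μ, hμ⟩ := mem_iUnion.1 h
  by_cases hD : D μ i q = 0
  · rw [mcNaughtonSet_eq_empty _ _ hD] at hμ
    exact hμ
  · exact ht μ hD (mcNaughtonSet_subset_eventInterval μ i k q hμ)

lemma sum_mcNaughtonSchedule_processor_le_one (hτ : StrictMono τ) (hD : ∀ μ i q, 0 ≤ D μ i q)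
    (k : ℕ) (t : ℝ) : ∑ i, ∑ q, mcNaughtonSchedule τ D i k q t ≤ 1 := by
  have hdisj : Pairwise (Disjoint on fun p : ι × Q =>
      ⋃ μ, mcNaughtonSet (D μ) (τ μ.castSucc) (τ μ.succ - τ μ.castSucc) p.1 k p.2) :=
    (pairwise_disjoint_Ioo_eventIntervals hτ).disjoint_iUnion_of_subset
      (fun μ p => mcNaughtonSet_subset_eventInterval μ p.1 k p.2)
      fun μ => pairwise_disjoint_mcNaughtonSet_processor _ _ (hD μ) k
  rw [← Fintype.sum_prod_type']
  exact sum_indicator_one_le_one_s17 hdisj t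

lemma sum_mcNaughtonSchedule_task_le_one (hτ : StrictMono τ) (hD : ∀ μ i q, 0 ≤ D μ i q)
    (htask : ∀ μ i, ∑ q, D μ i q ≤ τ μ.succ - τ μ.castSucc) (m : ℕ) (i : ι) (t : ℝ) :
    ∑ k : Fin m, ∑ q, mcNaughtonSchedule τ D i k q t ≤ 1 := by
  have hdisj : Pairwise (Disjoint on fun p : Fin m × Q =>
      ⋃ μ, mcNaughtonSet (D μ) (τ μ.castSucc) (τ μ.succ - τ μ.castSucc) i p.1 p.2) :=
    (pairwise_disjoint_Ioo_eventIntervals hτ).disjoint_iUnion_of_subset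
      (fun μ p => mcNaughtonSet_subset_eventInterval μ i p.1 p.2)
      fun μ => pairwise_disjoint_mcNaughtonSet_task _ _ (hD μ) (htask μ) i m
  rw [← Fintype.sum_prod_type']
  exact sum_indicator_one_le_one_s17 hdisj t

lemma integral_sum_mcNaughtonSchedule (hτ : StrictMono τ) (hD : ∀ μ i q, 0 ≤ D μ i q) {m : ℕ}
    (htot : ∀ μ, ∑ i, ∑ q, D μ i q ≤ m * (τ μ.succ - τ μ.castSucc)) (μ : Fin N) (i : ι) (q : Q) :
    ∫ t in τ μ.castSucc..τ μ.succ, ∑ k : Fin m, mcNaughtonSchedule τ D i k q t = D μ i q := by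
  rw [intervalIntegral.integral_finsetSum (f := fun (k : Fin m) => mcNaughtonSchedule τ D i k q)
    fun k _ => intervalIntegrable_of_binary (measurable_mcNaughtonSchedule i k q)
      (mcNaughtonSchedule_eq_zero_or_one i k q)]
  simp only [mcNaughtonSchedule, integral_indicator_iUnion_eventIntervals hτ
    (fun ν => mcNaughtonSet_subset_eventInterval ν i _ q)]
  simpa only [add_sub_cancel] using
    sum_integral_mcNaughtonSet (τ μ.castSucc) _ (hD μ) (succ_sub_castSucc_nonneg hτ μ) (htot μ) i q

end Realization

section SchedulingProblem

variable {N n m ℓ : ℕ} {τ : Fin (N + 1) → ℝ} {s c : Fin ℓ → ℝ} {xbar : Fin n → ℝ}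
  {b e : Fin n → Fin (N + 1)}

def scheduleValues (m : ℕ) (τ : Fin (N + 1) → ℝ) (s c : Fin ℓ → ℝ) (xbar : Fin n → ℝ)
    (b e : Fin n → Fin (N + 1)) : Set ℝ :=
  {v | ∃ (a : Fin n → Fin m → Fin ℓ → ℝ → ℝ) (x : Fin n → ℝ → ℝ),
      (∀ i k q, Measurable (a i k q)) ∧
      (∀ i k q t, a i k q t = 0 ∨ a i k q t = 1) ∧
      (∀ i k q t, (t < τ (b i) ∨ τ (e i) ≤ t) → a i k q t = 0) ∧
      (∀ i t, (∑ k, ∑ q, a i k q t) ≤ 1) ∧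
      (∀ k t, (∑ i, ∑ q, a i k q t) ≤ 1) ∧
      (∀ i, IntervalIntegrable (fun u => ∑ k, ∑ q, s q * a i k q u) volume
        (τ (b i)) (τ (e i))) ∧
      (∀ i t, x i t = xbar i - ∫ u in τ (b i)..t, ∑ k, ∑ q, s q * a i k q u) ∧
      (∀ i, x i (τ (e i)) = 0) ∧
      IntervalIntegrable (fun t => ∑ i, ∑ k, ∑ q, a i k q t * c q) volume
        (τ 0) (τ (Fin.last N)) ∧
      v = ∫ t in (τ 0)..(τ (Fin.last N)), ∑ i, ∑ k, ∑ q, a i k q t * c q}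

def lpValues (m : ℕ) (τ : Fin (N + 1) → ℝ) (s c : Fin ℓ → ℝ) (xbar : Fin n → ℝ)
    (b e : Fin n → Fin (N + 1)) : Set ℝ :=
  {v | ∃ (ξ : Fin n → Fin (N + 1) → ℝ) (w : Fin n → Fin ℓ → Fin N → ℝ),
      (∀ i, ξ i (b i) = xbar i) ∧
      (∀ i (μ : Fin (N + 1)), ¬((b i : ℕ) ≤ μ ∧ (μ : ℕ) < e i) → ξ i μ = 0) ∧
      (∀ i (μ : Fin N), (b i : ℕ) ≤ μ → (μ : ℕ) < e i →
        ξ i μ.succ = ξ i μ.castSucc - (τ μ.succ - τ μ.castSucc) * ∑ q, s q * w i q μ) ∧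
      (∀ i (μ : Fin N), (∑ q, w i q μ) ≤ 1) ∧
      (∀ μ : Fin N, (∑ i, ∑ q, w i q μ) ≤ (m : ℝ)) ∧
      (∀ i q (μ : Fin N), 0 ≤ w i q μ ∧ w i q μ ≤ 1) ∧
      v = ∑ μ : Fin N, ∑ i, ∑ q, (τ μ.succ - τ μ.castSucc) * w i q μ * c q}

lemma eq_sub_integral_of_forall_eq_sub_integral {x g : ℝ → ℝ} {x₀ t₀ : ℝ}
    (hg : ∀ u v, IntervalIntegrable g volume u v) (hx : ∀ t, x t = x₀ - ∫ u in t₀..t, g u)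
    (t₁ t₂ : ℝ) : x t₂ = x t₁ - ∫ u in t₁..t₂, g u := by
  rw [hx, hx, ← intervalIntegral.integral_add_adjacent_intervals (hg t₀ t₁) (hg t₁ t₂)]
  ring

lemma scheduleValues_subset_lpValues (hτ : StrictMono τ) (hbe : ∀ i, (b i : ℕ) < e i) :
    scheduleValues m τ s c xbar b e ⊆ lpValues m τ s c xbar b e := by
  rintro v ⟨a, x, hmeas, hbin, -, htask, hproc, -, hx, hterm, -, rfl⟩
  have hΔ : ∀ μ : Fin N, τ μ.castSucc < τ μ.succ := fun μ => hτ Fin.castSucc_lt_succ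
  have ha : ∀ i k q u v, IntervalIntegrable (a i k q) volume u v := fun i k q _ _ =>
    intervalIntegrable_of_binary (hmeas i k q) (hbin i k q)
  have hnn : ∀ i k q t, 0 ≤ a i k q t := fun i k q t => by
    rcases hbin i k q t with h | h <;> simp [h]
  let ξ : Fin n → Fin (N + 1) → ℝ := fun i μ =>
    if (b i : ℕ) ≤ μ ∧ (μ : ℕ) < e i then x i (τ μ) else 0
  have hξ : ∀ i (μ : Fin (N + 1)), (b i : ℕ) ≤ μ → (μ : ℕ) ≤ e i → ξ i μ = x i (τ μ) := by
    intro i μ hbμ hμe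
    rcases hμe.lt_or_eq with hlt | heq
    · exact if_pos ⟨hbμ, hlt⟩
    · rw [Fin.ext heq, hterm]
      exact if_neg fun h => h.2.ne rfl
  refine ⟨ξ, fun i q μ => averageLoad a (τ μ.castSucc) (τ μ.succ) i q, fun i => ?_,
    fun i μ h => if_neg h, fun i μ hbμ hμe => ?_,
    fun i μ => sum_averageLoad_le_one (fun i k q => ha i k q _ _) (hΔ μ) i (htask i),
    fun μ => by simpa using sum_sum_averageLoad_le_card (fun i k q => ha i k q _ _) (hΔ μ) hproc,
    fun i q μ => averageLoad_mem_Icc (fun i k q => ha i k q _ _) (hΔ μ) hnn htask i q, ?_⟩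
  · rw [hξ i (b i) le_rfl (hbe i).le, hx, intervalIntegral.integral_same, sub_zero]
  · rw [hξ i μ.succ (by simp; omega) (by simpa using hμe),
      hξ i μ.castSucc hbμ (by simpa using hμe.le),
      ← integral_work_eq_averageLoad (fun i k q => ha i k q _ _) (hΔ μ).ne]
    exact eq_sub_integral_of_forall_eq_sub_integral
      (fun u v => intervalIntegrable_sum_sum_mul (fun k q => ha i k q u v) s) (hx i) _ _
  · rw [← sum_integral_eventIntervals_univ τ
      fun u v => intervalIntegrable_sum_sum_sum_mul (fun i k q => ha i k q u v) c]
    exact sum_congr rfl fun μ _ =>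
      integral_cost_eq_averageLoad (fun i k q => ha i k q _ _) (hΔ μ).ne c

lemma sum_window_work_eq_of_lp {ξ : Fin n → Fin (N + 1) → ℝ} {w : Fin n → Fin ℓ → Fin N → ℝ}
    (hbe : ∀ i, (b i : ℕ) < e i) (hξb : ∀ i, ξ i (b i) = xbar i)
    (hξout : ∀ i (μ : Fin (N + 1)), ¬((b i : ℕ) ≤ μ ∧ (μ : ℕ) < e i) → ξ i μ = 0)
    (hrec : ∀ i (μ : Fin N), (b i : ℕ) ≤ μ → (μ : ℕ) < e i →
      ξ i μ.succ = ξ i μ.castSucc - (τ μ.succ - τ μ.castSucc) * ∑ q, s q * w i q μ) (i : Fin n) :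
    ∑ μ ∈ univ.filter (fun μ : Fin N => (b i : ℕ) ≤ μ ∧ (μ : ℕ) < e i),
      (τ μ.succ - τ μ.castSucc) * ∑ q, s q * w i q μ = xbar i := by
  calc _ = ∑ μ ∈ univ.filter (fun μ : Fin N => (b i : ℕ) ≤ μ ∧ (μ : ℕ) < e i),
        -(ξ i μ.succ - ξ i μ.castSucc) := sum_congr rfl fun μ hμ => by
          obtain ⟨hbμ, hμe⟩ := (Finset.mem_filter.1 hμ).2
          rw [hrec i μ hbμ hμe]
          ring
    _ = xbar i := by
      rw [sum_neg_distrib, sum_filter_succ_sub_castSucc (ξ i) (Fin.le_def.2 (hbe i).le), hξb,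
        hξout i (e i) fun h => h.2.ne rfl]
      ring

/-- Outside task `i`'s window the LP's `w` is not tied to the dynamics, so it is dropped. -/
def windowedWork (τ : Fin (N + 1) → ℝ) (b e : Fin n → Fin (N + 1))
    (w : Fin n → Fin ℓ → Fin N → ℝ) (μ : Fin N) (i : Fin n) (q : Fin ℓ) : ℝ :=
  if (b i : ℕ) ≤ μ ∧ (μ : ℕ) < e i then (τ μ.succ - τ μ.castSucc) * w i q μ else 0

section WindowedWork

variable {w : Fin n → Fin ℓ → Fin N → ℝ} (hτ : StrictMono τ) (hw : ∀ i q μ, 0 ≤ w i q μ)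
include hτ hw

lemma windowedWork_nonneg (μ : Fin N) (i : Fin n) (q : Fin ℓ) :
    0 ≤ windowedWork τ b e w μ i q := by
  unfold windowedWork
  split_ifs
  exacts [mul_nonneg (succ_sub_castSucc_nonneg hτ μ) (hw i q μ), le_rfl]

lemma windowedWork_le (μ : Fin N) (i : Fin n) (q : Fin ℓ) :
    windowedWork τ b e w μ i q ≤ (τ μ.succ - τ μ.castSucc) * w i q μ := by
  unfold windowedWork
  split_ifs
  exacts [le_rfl, mul_nonneg (succ_sub_castSucc_nonneg hτ μ) (hw i q μ)]

lemma sum_windowedWork_le (htask : ∀ i (μ : Fin N), ∑ q, w i q μ ≤ 1) (μ : Fin N) (i : Fin n) :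
    ∑ q, windowedWork τ b e w μ i q ≤ τ μ.succ - τ μ.castSucc :=
  calc ∑ q, windowedWork τ b e w μ i q ≤ (τ μ.succ - τ μ.castSucc) * ∑ q, w i q μ := by
        rw [Finset.mul_sum]
        exact sum_le_sum fun q _ => windowedWork_le hτ hw μ i q
    _ ≤ τ μ.succ - τ μ.castSucc :=
        mul_le_of_le_one_right (succ_sub_castSucc_nonneg hτ μ) (htask i μ)

lemma sum_sum_windowedWork_le (hproc : ∀ μ : Fin N, ∑ i, ∑ q, w i q μ ≤ (m : ℝ)) (μ : Fin N) :
    ∑ i, ∑ q, windowedWork τ b e w μ i q ≤ m * (τ μ.succ - τ μ.castSucc) :=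
  calc ∑ i, ∑ q, windowedWork τ b e w μ i q
      ≤ (τ μ.succ - τ μ.castSucc) * ∑ i, ∑ q, w i q μ := by
        simp_rw [Finset.mul_sum]
        exact sum_le_sum fun i _ => sum_le_sum fun q _ => windowedWork_le hτ hw μ i q
    _ ≤ m * (τ μ.succ - τ μ.castSucc) := by
        rw [mul_comm]
        exact mul_le_mul_of_nonneg_right (hproc μ) (succ_sub_castSucc_nonneg hτ μ)

end WindowedWork

lemma mcNaughtonSchedule_windowedWork_eq_zero (hτ : StrictMono τ)
    {w : Fin n → Fin ℓ → Fin N → ℝ} {i : Fin n} {t : ℝ} (ht : t < τ (b i) ∨ τ (e i) ≤ t)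
    (k : ℕ) (q : Fin ℓ) : mcNaughtonSchedule τ (windowedWork τ b e w) i k q t = 0 := by
  refine mcNaughtonSchedule_eq_zero (fun μ hD hμ => ?_) k
  by_cases hwin : (b i : ℕ) ≤ μ ∧ (μ : ℕ) < e i
  · have hb : τ (b i) ≤ τ μ.castSucc := hτ.monotone (Fin.le_def.2 hwin.1)
    have he : τ μ.succ ≤ τ (e i) := hτ.monotone (Fin.le_def.2 (by simpa using hwin.2))
    rcases ht with ht | ht <;> linarith [hμ.1, hμ.2]
  · exact hD (if_neg hwin)

lemma exists_scheduleValue_le (hτ : StrictMono τ) (hc : ∀ q, 0 < c q)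
    (hbe : ∀ i, (b i : ℕ) < e i) {v : ℝ} (hv : v ∈ lpValues m τ s c xbar b e) :
    ∃ v' ∈ scheduleValues m τ s c xbar b e, v' ≤ v := by
  obtain ⟨ξ, w, hξb, hξout, hrec, htask, hproc, hw, rfl⟩ := hv
  have hw0 : ∀ i q μ, 0 ≤ w i q μ := fun i q μ => (hw i q μ).1
  have hDnn := windowedWork_nonneg (b := b) (e := e) hτ hw0
  let a : Fin n → Fin m → Fin ℓ → ℝ → ℝ := fun i k q =>
    mcNaughtonSchedule τ (windowedWork τ b e w) i k q
  have ha : ∀ i k q u v, IntervalIntegrable (a i k q) volume u v := fun i k q _ _ =>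
    intervalIntegrable_of_binary (measurable_mcNaughtonSchedule i k q)
      (mcNaughtonSchedule_eq_zero_or_one i k q)
  have hload : ∀ μ i q,
      ∫ t in τ μ.castSucc..τ μ.succ, ∑ k, a i k q t = windowedWork τ b e w μ i q :=
    integral_sum_mcNaughtonSchedule hτ hDnn (sum_sum_windowedWork_le hτ hw0 hproc)
  refine ⟨_, ⟨a, fun i t => xbar i - ∫ u in τ (b i)..t, ∑ k, ∑ q, s q * a i k q u,
    fun i k q => measurable_mcNaughtonSchedule i k q,
    fun i k q t => mcNaughtonSchedule_eq_zero_or_one i k q t,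
    fun i k q t ht => mcNaughtonSchedule_windowedWork_eq_zero hτ ht k q,
    fun i t => sum_mcNaughtonSchedule_task_le_one hτ hDnn (sum_windowedWork_le hτ hw0 htask) m i t,
    fun k t => sum_mcNaughtonSchedule_processor_le_one hτ hDnn k t,
    fun i => intervalIntegrable_sum_sum_mul (fun k q => ha i k q _ _) s, fun _ _ => rfl,
    fun i => ?_, intervalIntegrable_sum_sum_sum_mul (fun i k q => ha i k q _ _) c, rfl⟩, ?_⟩
  · dsimp only
    rw [← sum_integral_eventIntervals τ
        (fun u v => intervalIntegrable_sum_sum_mul (fun k q => ha i k q u v) s)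
        (Fin.le_def.2 (hbe i).le),
      ← sum_window_work_eq_of_lp hbe hξb hξout hrec i, sub_eq_zero]
    refine sum_congr rfl fun μ hμ => ?_
    rw [integral_sum_sum_mul (fun k q => ha i k q _ _), Finset.mul_sum]
    refine sum_congr rfl fun q _ => ?_
    rw [hload, windowedWork, if_pos (Finset.mem_filter.1 hμ).2]
    ring
  · rw [← sum_integral_eventIntervals_univ τ
      fun u v => intervalIntegrable_sum_sum_sum_mul (fun i k q => ha i k q u v) c]
    refine sum_le_sum fun μ _ => ?_
    rw [integral_sum_sum_sum_mul (fun i k q => ha i k q _ _)]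
    simp_rw [hload]
    exact sum_le_sum fun i _ => sum_le_sum fun q _ =>
      mul_le_mul_of_nonneg_right (windowedWork_le hτ hw0 μ i q) (hc q).le

end SchedulingProblem

theorem stmt17_general (N n m ℓ : ℕ) (τ : Fin (N + 1) → ℝ) (hτ : StrictMono τ)
    (s : Fin ℓ → ℝ)
    (c : Fin ℓ → ℝ) (hc : ∀ q, 0 < c q)
    (xbar : Fin n → ℝ)
    (b e : Fin n → Fin (N + 1)) (hbe : ∀ i, (b i : ℕ) < e i)
    (Vc VL : Set ℝ)
    (hVc : Vc = {v | ∃ (a : Fin n → Fin m → Fin ℓ → ℝ → ℝ) (x : Fin n → ℝ → ℝ),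
      (∀ i k q, Measurable (a i k q)) ∧
      (∀ i k q t, a i k q t = 0 ∨ a i k q t = 1) ∧
      (∀ i k q t, (t < τ (b i) ∨ τ (e i) ≤ t) → a i k q t = 0) ∧
      (∀ i t, (∑ k, ∑ q, a i k q t) ≤ 1) ∧
      (∀ k t, (∑ i, ∑ q, a i k q t) ≤ 1) ∧
      (∀ i, IntervalIntegrable (fun u => ∑ k, ∑ q, s q * a i k q u) volume
        (τ (b i)) (τ (e i))) ∧
      (∀ i t, x i t = xbar i - ∫ u in τ (b i)..t, ∑ k, ∑ q, s q * a i k q u) ∧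
      (∀ i, x i (τ (e i)) = 0) ∧
      IntervalIntegrable (fun t => ∑ i, ∑ k, ∑ q, a i k q t * c q) volume
        (τ 0) (τ (Fin.last N)) ∧
      v = ∫ t in (τ 0)..(τ (Fin.last N)), ∑ i, ∑ k, ∑ q, a i k q t * c q})
    (hVL : VL = {v | ∃ (ξ : Fin n → Fin (N + 1) → ℝ) (w : Fin n → Fin ℓ → Fin N → ℝ),
      (∀ i, ξ i (b i) = xbar i) ∧
      (∀ i (μ : Fin (N + 1)), ¬((b i : ℕ) ≤ μ ∧ (μ : ℕ) < e i) → ξ i μ = 0) ∧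
      (∀ i (μ : Fin N), (b i : ℕ) ≤ μ → (μ : ℕ) < e i →
        ξ i μ.succ = ξ i μ.castSucc - (τ μ.succ - τ μ.castSucc) * ∑ q, s q * w i q μ) ∧
      (∀ i (μ : Fin N), (∑ q, w i q μ) ≤ 1) ∧
      (∀ μ : Fin N, (∑ i, ∑ q, w i q μ) ≤ (m : ℝ)) ∧
      (∀ i q (μ : Fin N), 0 ≤ w i q μ ∧ w i q μ ≤ 1) ∧
      v = ∑ μ : Fin N, ∑ i, ∑ q, (τ μ.succ - τ μ.castSucc) * w i q μ * c q}) :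
    sInf Vc = sInf VL := by
  subst hVc hVL
  exact csInf_eq_csInf_of_forall_exists_le
    (fun v hv => ⟨v, scheduleValues_subset_lpValues hτ hbe hv, le_rfl⟩)
    fun v hv => exists_scheduleValue_le hτ hc hbe hv

/-- Equivalence of the continuous-time binary scheduling problem and the discrete-time
LP-DVFS workload partitioning problem: their optimal values coincide, provided the event
times τ_0 < ... < τ_N include all arrival times τ_{b_i} and deadlines τ_{e_i}. -/
theorem stmt17 (N n m ℓ : ℕ) (τ : Fin (N + 1) → ℝ) (hτ : StrictMono τ)
    (s : Fin ℓ → ℝ) (hs : ∀ q, 0 < s q)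
    (c : Fin ℓ → ℝ) (hc : ∀ q, 0 < c q)
    (xbar : Fin n → ℝ) (hxbar : ∀ i, 0 < xbar i)
    (b e : Fin n → Fin (N + 1)) (hbe : ∀ i, (b i : ℕ) < e i)
    (Vc VL : Set ℝ)
    (hVc : Vc = {v | ∃ (a : Fin n → Fin m → Fin ℓ → ℝ → ℝ) (x : Fin n → ℝ → ℝ),
      (∀ i k q, Measurable (a i k q)) ∧
      (∀ i k q t, a i k q t = 0 ∨ a i k q t = 1) ∧
      (∀ i k q t, (t < τ (b i) ∨ τ (e i) ≤ t) → a i k q t = 0) ∧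
      (∀ i t, (∑ k, ∑ q, a i k q t) ≤ 1) ∧
      (∀ k t, (∑ i, ∑ q, a i k q t) ≤ 1) ∧
      (∀ i, IntervalIntegrable (fun u => ∑ k, ∑ q, s q * a i k q u) volume
        (τ (b i)) (τ (e i))) ∧
      (∀ i t, x i t = xbar i - ∫ u in τ (b i)..t, ∑ k, ∑ q, s q * a i k q u) ∧
      (∀ i, x i (τ (e i)) = 0) ∧
      IntervalIntegrable (fun t => ∑ i, ∑ k, ∑ q, a i k q t * c q) volume
        (τ 0) (τ (Fin.last N)) ∧
      v = ∫ t in (τ 0)..(τ (Fin.last N)), ∑ i, ∑ k, ∑ q, a i k q t * c q})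
    (hVL : VL = {v | ∃ (ξ : Fin n → Fin (N + 1) → ℝ) (w : Fin n → Fin ℓ → Fin N → ℝ),
      (∀ i, ξ i (b i) = xbar i) ∧
      (∀ i (μ : Fin (N + 1)), ¬((b i : ℕ) ≤ μ ∧ (μ : ℕ) < e i) → ξ i μ = 0) ∧
      (∀ i (μ : Fin N), (b i : ℕ) ≤ μ → (μ : ℕ) < e i →
        ξ i μ.succ = ξ i μ.castSucc - (τ μ.succ - τ μ.castSucc) * ∑ q, s q * w i q μ) ∧
      (∀ i (μ : Fin N), (∑ q, w i q μ) ≤ 1) ∧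
      (∀ μ : Fin N, (∑ i, ∑ q, w i q μ) ≤ (m : ℝ)) ∧
      (∀ i q (μ : Fin N), 0 ≤ w i q μ ∧ w i q μ ≤ 1) ∧
      v = ∑ μ : Fin N, ∑ i, ∑ q, (τ μ.succ - τ μ.castSucc) * w i q μ * c q}) :
    sInf Vc = sInf VL :=
  stmt17_general N n m ℓ τ hτ s c hc xbar b e hbe Vc VL hVc hVL
end
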